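/- arXiv:1309.1304 — 2 statements merged into one kernel-verified Lean document; each statement's English description precedes it below -/
import Mathlib

section
/- Suppose that $A \subset \mathbb{R}^d$ is closed and is both totally disconnected in some direction $v \in S^{d-1}$ and intervally thin in the same direction $v$. Let $U \subset \mathbb{R}^d$ be open. Then every function $f : U \setminus A \to \mathbb{R}$ which is locally convex on the open set $U \setminus A$ admits a continuous extension to $U$, i.e., there exists a continuous function $F : U \to \mathbb{R}$ with $F = f$ on $U \setminus A$. -/
/-- `f` is locally convex on the open set `U`: every point of `U` has an open convex
neighbourhood `V ⊆ U` on which `f` is convex. -/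
def IsLocallyConvexOn {d : ℕ} (U : Set (EuclideanSpace ℝ (Fin d)))
    (f : EuclideanSpace ℝ (Fin d) → ℝ) : Prop :=
  ∀ x ∈ U, ∃ V : Set (EuclideanSpace ℝ (Fin d)),
    IsOpen V ∧ Convex ℝ V ∧ x ∈ V ∧ V ⊆ U ∧ ConvexOn ℝ V f

/-- `A` is intervally thin in the direction `v`. -/
def IntervallyThinIn {d : ℕ} (A : Set (EuclideanSpace ℝ (Fin d)))
    (v : EuclideanSpace ℝ (Fin d)) : Prop :=
  ∀ x y : EuclideanSpace ℝ (Fin d), (∃ t : ℝ, x - y = t • v) → ∀ ε > 0,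
    ∃ x' ∈ Metric.ball x ε, ∃ y' ∈ Metric.ball y ε, segment ℝ x' y' ∩ A = ∅

/-- `A` is totally disconnected in the direction `v`: its intersection with every line
parallel to `v` is totally disconnected. -/
def TotallyDisconnectedIn {d : ℕ} (A : Set (EuclideanSpace ℝ (Fin d)))
    (v : EuclideanSpace ℝ (Fin d)) : Prop :=
  ∀ a : EuclideanSpace ℝ (Fin d),
    IsTotallyDisconnected (A ∩ {x | ∃ t : ℝ, x = a + t • v})

open Set Metric Filter

lemma convexOn_affine1 {I : Set ℝ} (hI : Convex ℝ I) (c e : ℝ) :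
    ConvexOn ℝ I (fun s => s * c + e) := by
  refine ⟨hI, fun x _ y _ a b ha hb hab => le_of_eq ?_⟩
  simp only [smul_eq_mul]
  linear_combination (-e) * hab

lemma oned_chord (φ : ℝ → ℝ)
    (h : ∀ s ∈ Set.Icc (0:ℝ) 1, ∃ I : Set ℝ, IsOpen I ∧ Convex ℝ I ∧ s ∈ I ∧ ConvexOn ℝ I φ)
    {t : ℝ} (ht : t ∈ Set.Icc (0:ℝ) 1) :
    φ t ≤ (1 - t) * φ 0 + t * φ 1 := by
  set ψ : ℝ → ℝ := fun s => φ s + (s * (φ 0 - φ 1) - φ 0) with hψ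
  have hψloc : ∀ s ∈ Set.Icc (0:ℝ) 1, ∃ I : Set ℝ,
      IsOpen I ∧ Convex ℝ I ∧ s ∈ I ∧ ConvexOn ℝ I ψ := by
    intro s hs
    obtain ⟨I, hIo, hIc, hsI, hconv⟩ := h s hs
    exact ⟨I, hIo, hIc, hsI, hconv.add (convexOn_affine1 hIc _ _)⟩
  have hψcont : ContinuousOn ψ (Set.Icc (0:ℝ) 1) := by
    intro s hs
    obtain ⟨I, hIo, hIc, hsI, hconv⟩ := hψloc s hs
    exact ((hconv.continuousOn hIo).continuousAt (hIo.mem_nhds hsI)).continuousWithinAt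
  have hψ0 : ψ 0 = 0 := by simp [hψ]
  have hψ1 : ψ 1 = 0 := by show φ 1 + (1 * (φ 0 - φ 1) - φ 0) = 0; ring
  -- main claim : ψ ≤ 0 on Icc 0 1
  have key : ∀ s ∈ Set.Icc (0:ℝ) 1, ψ s ≤ 0 := by
    obtain ⟨t₀, ht₀, hmax⟩ := isCompact_Icc.exists_isMaxOn (⟨0, by norm_num⟩ :
      (Set.Icc (0:ℝ) 1).Nonempty) hψcont
    by_cases hM : ψ t₀ ≤ 0
    · exact fun s hs => le_trans (hmax hs) hM
    push_neg at hM
    exfalso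
    set M := ψ t₀ with hMdef
    set S : Set ℝ := Set.Icc (0:ℝ) 1 ∩ ψ ⁻¹' {M} with hS
    have hSclosed : IsClosed S :=
      hψcont.preimage_isClosed_of_isClosed isClosed_Icc isClosed_singleton
    have hSne : S.Nonempty := ⟨t₀, ht₀, rfl⟩
    have hSbdd : BddAbove S := ⟨1, fun x hx => hx.1.2⟩
    set t₁ := sSup S with ht₁def
    have ht₁S : t₁ ∈ S := hSclosed.csSup_mem hSne hSbdd
    have ht₁Icc : t₁ ∈ Set.Icc (0:ℝ) 1 := ht₁S.1
    have ht₁M : ψ t₁ = M := ht₁S.2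
    have ht₁0 : t₁ ≠ 0 := by intro h0; rw [h0] at ht₁M; rw [hψ0] at ht₁M; linarith
    have ht₁1 : t₁ ≠ 1 := by intro h1; rw [h1] at ht₁M; rw [hψ1] at ht₁M; linarith
    have h0t₁ : 0 < t₁ := lt_of_le_of_ne ht₁Icc.1 (Ne.symm ht₁0)
    have ht₁lt : t₁ < 1 := lt_of_le_of_ne ht₁Icc.2 ht₁1
    obtain ⟨I, hIo, hIc, hsI, hconv⟩ := hψloc t₁ ht₁Icc
    obtain ⟨δ₀, hδ₀, hball⟩ := Metric.isOpen_iff.mp hIo t₁ hsI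
    set δ := min (δ₀ / 2) (min t₁ (1 - t₁)) with hδdef
    have hδpos : 0 < δ := lt_min (by positivity) (lt_min h0t₁ (by linarith))
    have hmem1 : t₁ - δ ∈ I := by
      apply hball; rw [Real.ball_eq_Ioo]; constructor <;>
        [skip; skip] <;> simp only [hδdef] <;>
        nlinarith [min_le_left (δ₀/2) (min t₁ (1-t₁)), hδ₀]
    have hmem2 : t₁ + δ ∈ I := by
      apply hball; rw [Real.ball_eq_Ioo]; constructor <;>
        nlinarith [min_le_left (δ₀/2) (min t₁ (1-t₁)), hδ₀]
    have hδt₁ : δ ≤ t₁ := le_trans (min_le_right _ _) (min_le_left _ _)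
    have hδt₁' : δ ≤ 1 - t₁ := le_trans (min_le_right _ _) (min_le_right _ _)
    have hIcc1 : t₁ - δ ∈ Set.Icc (0:ℝ) 1 := ⟨by linarith, by linarith⟩
    have hIcc2 : t₁ + δ ∈ Set.Icc (0:ℝ) 1 := ⟨by linarith, by linarith⟩
    have hmid := hconv.2 hmem1 hmem2 (by norm_num : (0:ℝ) ≤ 1/2)
      (by norm_num : (0:ℝ) ≤ 1/2) (by norm_num)
    have heq : (1/2 : ℝ) • (t₁ - δ) + (1/2 : ℝ) • (t₁ + δ) = t₁ := by
      simp only [smul_eq_mul]; ring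
    rw [heq] at hmid
    have hlt : ψ (t₁ + δ) < M := by
      have hle2 : ψ (t₁ + δ) ≤ M := hmax hIcc2
      rcases lt_or_eq_of_le hle2 with h | h
      · exact h
      · exfalso
        have : t₁ + δ ∈ S := ⟨hIcc2, h⟩
        have := le_csSup hSbdd this
        linarith
    have hle : ψ (t₁ - δ) ≤ M := hmax hIcc1
    simp only [smul_eq_mul] at hmid
    rw [ht₁M] at hmid
    clear_value M t₁ δ ψ S
    linarith
  have := key t ht
  simp only [hψ] at this
  linarith

lemma chord0 {d : ℕ} {T : Set (EuclideanSpace ℝ (Fin d))} {f : EuclideanSpace ℝ (Fin d) → ℝ}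
    (hf : IsLocallyConvexOn T f) {x y : EuclideanSpace ℝ (Fin d)}
    (hseg : segment ℝ x y ⊆ T) {t : ℝ} (ht : t ∈ Set.Icc (0:ℝ) 1) :
    f ((1 - t) • x + t • y) ≤ (1 - t) * f x + t * f y := by
  set γ : ℝ →ᵃ[ℝ] EuclideanSpace ℝ (Fin d) := AffineMap.lineMap x y with hγ
  have hloc : ∀ s ∈ Set.Icc (0:ℝ) 1, ∃ I : Set ℝ,
      IsOpen I ∧ Convex ℝ I ∧ s ∈ I ∧ ConvexOn ℝ I (f ∘ γ) := by
    intro s hs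
    have hmem : γ s ∈ T := hseg (by rw [segment_eq_image_lineMap]; exact ⟨s, hs, rfl⟩)
    obtain ⟨V, hVo, hVc, hxV, _, hconv⟩ := hf (γ s) hmem
    exact ⟨γ ⁻¹' V, hVo.preimage AffineMap.lineMap_continuous, hVc.affine_preimage γ, hxV,
      hconv.comp_affineMap γ⟩
  have key := oned_chord (f ∘ γ) hloc ht
  simpa [hγ, AffineMap.lineMap_apply_module] using key

lemma cont_off {d : ℕ} {W : Set (EuclideanSpace ℝ (Fin d))} {f : EuclideanSpace ℝ (Fin d) → ℝ}
    (hf : IsLocallyConvexOn W f) {x : EuclideanSpace ℝ (Fin d)} (hx : x ∈ W) :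
    ContinuousAt f x := by
  obtain ⟨V, hVo, hVc, hxV, _, hconv⟩ := hf x hx
  exact (hconv.continuousOn hVo).continuousAt (hVo.mem_nhds hxV)

lemma chordC {d : ℕ} {A U : Set (EuclideanSpace ℝ (Fin d))} (hA : IsClosed A)
    {v : EuclideanSpace ℝ (Fin d)} (hthin : IntervallyThinIn A v)
    {f : EuclideanSpace ℝ (Fin d) → ℝ} (hf : IsLocallyConvexOn (U \ A) f)
    {x y : EuclideanSpace ℝ (Fin d)} (hpar : ∃ c : ℝ, x - y = c • v)
    {ε₀ : ℝ} (hε₀ : 0 < ε₀)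
    (hsub : ∀ x' y', x' ∈ Metric.ball x ε₀ → y' ∈ Metric.ball y ε₀ → segment ℝ x' y' ⊆ U)
    (hx : x ∈ U \ A) (hy : y ∈ U \ A)
    {t : ℝ} (ht : t ∈ Set.Icc (0:ℝ) 1) (hm : (1 - t) • x + t • y ∉ A) :
    f ((1 - t) • x + t • y) ≤ (1 - t) * f x + t * f y := by
  set m : EuclideanSpace ℝ (Fin d) := (1 - t) • x + t • y with hmdef
  have hmU : m ∈ U := by
    apply hsub x y (mem_ball_self hε₀) (mem_ball_self hε₀)
    exact ⟨1 - t, t, by linarith [ht.2], ht.1, by linarith [ht.1, ht.2], rfl⟩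
  have hcx : ContinuousAt f x := cont_off hf hx
  have hcy : ContinuousAt f y := cont_off hf hy
  have hcm : ContinuousAt f m := cont_off hf ⟨hmU, hm⟩
  refine le_of_forall_pos_le_add fun η hη => ?_
  obtain ⟨εx, hεx, hx'⟩ := Metric.continuousAt_iff.mp hcx (η/2) (by linarith)
  obtain ⟨εy, hεy, hy'⟩ := Metric.continuousAt_iff.mp hcy (η/2) (by linarith)
  obtain ⟨εm, hεm, hm'⟩ := Metric.continuousAt_iff.mp hcm (η/2) (by linarith)
  set ε := min (min εx εy) (min εm ε₀) with hεdef
  have hε : 0 < ε := lt_min (lt_min hεx hεy) (lt_min hεm hε₀)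
  obtain ⟨x', hx'b, y', hy'b, hsegA⟩ := hthin x y hpar ε hε
  have hsegU : segment ℝ x' y' ⊆ U := by
    apply hsub x' y'
    · exact mem_ball.mpr (lt_of_lt_of_le (mem_ball.mp hx'b)
        (le_trans (min_le_right _ _) (min_le_right _ _)))
    · exact mem_ball.mpr (lt_of_lt_of_le (mem_ball.mp hy'b)
        (le_trans (min_le_right _ _) (min_le_right _ _)))
  have hsegT : segment ℝ x' y' ⊆ U \ A := by
    intro p hp
    refine ⟨hsegU hp, fun hpA => ?_⟩
    have : p ∈ segment ℝ x' y' ∩ A := ⟨hp, hpA⟩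
    rw [hsegA] at this
    exact this
  have hkey := chord0 hf hsegT ht
  set m' : EuclideanSpace ℝ (Fin d) := (1 - t) • x' + t • y' with hm'def
  have hdist : dist m' m < ε := by
    have h1 : dist x' x < ε := mem_ball.mp hx'b
    have h2 : dist y' y < ε := mem_ball.mp hy'b
    have : m' - m = (1 - t) • (x' - x) + t • (y' - y) := by
      rw [hm'def, hmdef]; module
    rw [dist_eq_norm, this]
    calc ‖(1 - t) • (x' - x) + t • (y' - y)‖
        ≤ ‖(1 - t) • (x' - x)‖ + ‖t • (y' - y)‖ := norm_add_le _ _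
      _ = (1 - t) * ‖x' - x‖ + t * ‖y' - y‖ := by
          rw [norm_smul, norm_smul, Real.norm_eq_abs, Real.norm_eq_abs,
            abs_of_nonneg (by linarith [ht.2] : (0:ℝ) ≤ 1 - t), abs_of_nonneg ht.1]
      _ < ε := by
          have e1 : ‖x' - x‖ < ε := by rw [← dist_eq_norm]; exact h1
          have e2 : ‖y' - y‖ < ε := by rw [← dist_eq_norm]; exact h2
          have h1t : (0:ℝ) ≤ 1 - t := by linarith [ht.2]
          rcases le_total ‖x' - x‖ ‖y' - y‖ with hc | hc
          · nlinarith [mul_nonneg h1t (sub_nonneg.mpr hc)]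
          · nlinarith [mul_nonneg ht.1 (sub_nonneg.mpr hc)]
  have hfm : f m ≤ f m' + η/2 := by
    have := hm' (lt_of_lt_of_le hdist (le_trans (min_le_right _ _) (min_le_left _ _)))
    rw [Real.dist_eq, abs_sub_lt_iff] at this
    linarith [this.2]
  have hfx : f x' ≤ f x + η/2 := by
    have := hx' (lt_of_lt_of_le (mem_ball.mp hx'b)
      (le_trans (min_le_left _ _) (min_le_left _ _)))
    rw [Real.dist_eq, abs_sub_lt_iff] at this
    linarith [this.1]
  have hfy : f y' ≤ f y + η/2 := by
    have := hy' (lt_of_lt_of_le (mem_ball.mp hy'b)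
      (le_trans (min_le_left _ _) (min_le_right _ _)))
    rw [Real.dist_eq, abs_sub_lt_iff] at this
    linarith [this.1]
  have h1t : (0:ℝ) ≤ 1 - t := by linarith [ht.2]
  calc f m ≤ f m' + η/2 := hfm
    _ ≤ (1 - t) * f x' + t * f y' + η/2 := by linarith [hkey]
    _ ≤ (1 - t) * (f x + η/2) + t * (f y + η/2) + η/2 := by
        have := mul_le_mul_of_nonneg_left hfx h1t
        have := mul_le_mul_of_nonneg_left hfy ht.1
        linarith
    _ = (1 - t) * f x + t * f y + η := by ring

lemma line_dense {d : ℕ} {A : Set (EuclideanSpace ℝ (Fin d))} {v : EuclideanSpace ℝ (Fin d)}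
    (hv : ‖v‖ = 1) (htd : TotallyDisconnectedIn A v) (a : EuclideanSpace ℝ (Fin d))
    {u w : ℝ} (huw : u < w) : ∃ s, u < s ∧ s < w ∧ a + s • v ∉ A := by
  by_contra hcon
  push_neg at hcon
  have hvne : v ≠ 0 := by intro h; rw [h, norm_zero] at hv; norm_num at hv
  set c : ℝ → EuclideanSpace ℝ (Fin d) := fun s => a + s • v with hc
  have hcont : Continuous c := continuous_const.add (continuous_id.smul continuous_const)
  have h12 : u + (w - u) / 3 < w - (w - u) / 3 := by linarith
  have hsub : c '' Set.Icc (u + (w - u) / 3) (w - (w - u) / 3) ⊆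
      A ∩ {x | ∃ t : ℝ, x = a + t • v} := by
    rintro _ ⟨s, hs, rfl⟩
    exact ⟨hcon s (by linarith [hs.1]) (by linarith [hs.2]), ⟨s, rfl⟩⟩
  have hpre : IsPreconnected (c '' Set.Icc (u + (w - u) / 3) (w - (w - u) / 3)) :=
    isPreconnected_Icc.image c hcont.continuousOn
  have hsub' := htd a _ hsub hpre
  have h1 : c (u + (w - u) / 3) ∈ c '' Set.Icc (u + (w - u) / 3) (w - (w - u) / 3) :=
    ⟨_, ⟨le_refl _, le_of_lt h12⟩, rfl⟩
  have h2 : c (w - (w - u) / 3) ∈ c '' Set.Icc (u + (w - u) / 3) (w - (w - u) / 3) :=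
    ⟨_, ⟨le_of_lt h12, le_refl _⟩, rfl⟩
  have heq := hsub' h1 h2
  rw [hc] at heq
  simp only [add_right_inj] at heq
  have : u + (w - u) / 3 = w - (w - u) / 3 := smul_left_injective ℝ hvne heq
  linarith

lemma right_lim (g : ℝ → ℝ) (D : Set ℝ) (r : ℝ) (hr : 0 < r)
    (hdense : ∀ u w : ℝ, -r ≤ u → u < w → w ≤ r → ∃ s, s ∈ D ∧ u < s ∧ s < w)
    (hchord : ∀ s₁ s₂ s₃, s₁ ∈ D → s₂ ∈ D → s₃ ∈ D → -r < s₁ → s₁ < s₂ → s₂ < s₃ → s₃ < r →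
      g s₂ * (s₃ - s₁) ≤ g s₁ * (s₃ - s₂) + g s₃ * (s₂ - s₁)) :
    ∃ L : ℝ, ∀ ε > 0, ∃ η > 0, ∀ s ∈ D, 0 < s → s < η → |g s - L| < ε := by
  obtain ⟨d₂, hd₂D, hd₂1, hd₂2⟩ := hdense (-r/2) (-r/3) (by linarith) (by linarith) (by linarith)
  obtain ⟨d₁, hd₁D, hd₁1, hd₁2⟩ := hdense (-r/4) (-r/8) (by linarith) (by linarith) (by linarith)
  have hd21 : d₂ < d₁ := by linarith
  have hd₁neg : d₁ < 0 := by linarith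
  have hd₁r : -r < d₁ := by linarith
  have hd₂r : -r < d₂ := by linarith
  set σ : ℝ → ℝ := fun s => (g s - g d₁) / (s - d₁) with hσ
  set σ₀ : ℝ := (g d₁ - g d₂) / (d₁ - d₂) with hσ₀
  -- lower bound for σ on positive part
  have hlow : ∀ s ∈ D, 0 < s → s < r → σ₀ ≤ σ s := by
    intro s hsD hs0 hsr
    have hch := hchord d₂ d₁ s hd₂D hd₁D hsD hd₂r hd21 (by linarith) hsr
    show (g d₁ - g d₂) / (d₁ - d₂) ≤ (g s - g d₁) / (s - d₁)
    rw [div_le_div_iff₀ (by linarith) (by linarith)]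
    nlinarith [hch]
  -- monotonicity
  have hmono : ∀ s ∈ D, ∀ s' ∈ D, 0 < s → s < s' → s' < r → σ s ≤ σ s' := by
    intro s hsD s' hs'D hs0 hss' hs'r
    have hch := hchord d₁ s s' hd₁D hsD hs'D hd₁r (by linarith) hss' hs'r
    show (g s - g d₁) / (s - d₁) ≤ (g s' - g d₁) / (s' - d₁)
    rw [div_le_div_iff₀ (by linarith) (by linarith)]
    nlinarith [hch]
  set Sset : Set ℝ := σ '' {s | s ∈ D ∧ 0 < s ∧ s < r/2} with hSset
  have hSne : Sset.Nonempty := by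
    obtain ⟨s, hsD, h1, h2⟩ := hdense (r/8) (r/4) (by linarith) (by linarith) (by linarith)
    exact ⟨σ s, ⟨s, ⟨hsD, by linarith, by linarith⟩, rfl⟩⟩
  have hSbdd : BddBelow Sset := by
    refine ⟨σ₀, ?_⟩
    rintro _ ⟨s, ⟨hsD, hs0, hsr⟩, rfl⟩
    exact hlow s hsD hs0 (by linarith)
  set β := sInf Sset with hβ
  refine ⟨g d₁ - β * d₁, ?_⟩
  intro ε hε
  set ε₁ := ε / (2 * (|d₁| + 1)) with hε₁def
  have hε₁ : 0 < ε₁ := by positivity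
  obtain ⟨_, ⟨s₀, ⟨hs₀D, hs₀0, hs₀r⟩, rfl⟩, hs₀lt⟩ :=
    exists_lt_of_csInf_lt hSne (show sInf Sset < β + ε₁ by rw [← hβ]; linarith)
  set η := min s₀ (ε / (2 * (|β| + ε₁ + 1))) with hηdef
  have hη : 0 < η := lt_min hs₀0 (by positivity)
  refine ⟨η, hη, ?_⟩
  intro s hsD hs0 hsη
  have hss₀ : s < s₀ := lt_of_lt_of_le hsη (min_le_left _ _)
  have hβle : β ≤ σ s := csInf_le hSbdd ⟨s, ⟨hsD, hs0, by linarith⟩, rfl⟩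
  have hle : σ s ≤ σ s₀ := hmono s hsD s₀ hs₀D hs0 hss₀ (by linarith)
  have hσs : σ s < β + ε₁ := lt_of_le_of_lt hle hs₀lt
  have hsd : s - d₁ ≠ 0 := by intro h; have : d₁ < 0 := hd₁neg; linarith [hs0]
  have hgs : g s = g d₁ + σ s * (s - d₁) := by
    show g s = g d₁ + (g s - g d₁) / (s - d₁) * (s - d₁)
    rw [div_mul_cancel₀ _ hsd]; ring
  rw [hgs]
  have heq : g d₁ + σ s * (s - d₁) - (g d₁ - β * d₁) = σ s * s + (β - σ s) * d₁ := by ring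
  rw [heq]
  have h1 : |σ s * s| ≤ (|β| + ε₁) * s := by
    rw [abs_mul, abs_of_pos hs0]
    apply mul_le_mul_of_nonneg_right _ (le_of_lt hs0)
    rw [abs_le]
    constructor
    · have : -|β| ≤ β := neg_abs_le β
      linarith
    · have : β ≤ |β| := le_abs_self β
      linarith
  have h2 : |(β - σ s) * d₁| ≤ ε₁ * |d₁| := by
    rw [abs_mul]
    apply mul_le_mul_of_nonneg_right _ (abs_nonneg d₁)
    rw [abs_le]
    constructor <;> linarith
  have hsmall : s < ε / (2 * (|β| + ε₁ + 1)) := lt_of_lt_of_le hsη (min_le_right _ _)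
  calc |σ s * s + (β - σ s) * d₁| ≤ |σ s * s| + |(β - σ s) * d₁| := abs_add_le _ _
    _ ≤ (|β| + ε₁) * s + ε₁ * |d₁| := by linarith
    _ < ε := by
        have ha : (|β| + ε₁) * s < ε / 2 := by
          have hb : (|β| + ε₁) * s ≤ (|β| + ε₁ + 1) * s := by nlinarith
          have hc : (|β| + ε₁ + 1) * s < (|β| + ε₁ + 1) * (ε / (2 * (|β| + ε₁ + 1))) := by
            apply mul_lt_mul_of_pos_left hsmall (by positivity)
          have hd : (|β| + ε₁ + 1) * (ε / (2 * (|β| + ε₁ + 1))) = ε / 2 := by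
            field_simp
          linarith
        have hb : ε₁ * |d₁| < ε / 2 := by
          rw [hε₁def]
          rw [div_mul_eq_mul_div, div_lt_div_iff₀ (by positivity) (by norm_num)]
          nlinarith [abs_nonneg d₁]
        linarith

set_option maxHeartbeats 1000000 in
lemma tendsto_of_mem {d : ℕ} {A U : Set (EuclideanSpace ℝ (Fin d))} (hA : IsClosed A)
    {v : EuclideanSpace ℝ (Fin d)} (hv : ‖v‖ = 1)
    (htd : TotallyDisconnectedIn A v) (hthin : IntervallyThinIn A v)
    (hU : IsOpen U) {f : EuclideanSpace ℝ (Fin d) → ℝ} (hf : IsLocallyConvexOn (U \ A) f)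
    {a : EuclideanSpace ℝ (Fin d)} (ha : a ∈ U) :
    ∃ L : ℝ, Filter.Tendsto f (nhdsWithin a (U \ A)) (nhds L) := by
  have _hb : True := trivial
  by_cases haA : a ∈ A
  case neg =>
    exact ⟨f a, (cont_off hf ⟨ha, haA⟩).continuousWithinAt⟩
  -- main case : a ∈ A
  obtain ⟨r₀, hr₀, hball₀⟩ := Metric.isOpen_iff.mp hU a ha
  set r := r₀ / 5 with hrdef
  clear_value r
  have hr : 0 < r := by rw [hrdef]; positivity
  have hball5 : Metric.ball a (5 * r) ⊆ U := by
    rw [hrdef]; convert hball₀ using 2; ring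
  -- distance facts
  have hdista : ∀ s : ℝ, dist (a + s • v) a = |s| := by
    intro s
    rw [dist_eq_norm, add_sub_cancel_left, norm_smul, hv, Real.norm_eq_abs, mul_one]
  have hdistz : ∀ (z : EuclideanSpace ℝ (Fin d)) (s : ℝ),
      dist (z + s • v) (a + s • v) = dist z a := by
    intro z s
    rw [dist_eq_norm, dist_eq_norm]
    congr 1
    abel
  -- helper for segment subset hypothesis of chordC
  have hseg_sub : ∀ w₁ w₂ : EuclideanSpace ℝ (Fin d), w₁ ∈ ball a (2*r) → w₂ ∈ ball a (2*r) →
      ∀ x' y', x' ∈ ball w₁ r → y' ∈ ball w₂ r → segment ℝ x' y' ⊆ U := by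
    intro w₁ w₂ h1 h2 x' y' hx' hy' p hp
    have hx'' : x' ∈ ball a (3*r) := by
      rw [mem_ball] at *
      linarith [dist_triangle x' w₁ a]
    have hy'' : y' ∈ ball a (3*r) := by
      rw [mem_ball] at *
      linarith [dist_triangle y' w₂ a]
    have hpball : p ∈ ball a (3*r) := (convex_ball a (3*r)).segment_subset hx'' hy'' hp
    exact hball5 (ball_subset_ball (by linarith) hpball)
  set g : ℝ → ℝ := fun s => f (a + s • v) with hgdef
  set D : Set ℝ := {s | a + s • v ∉ A} with hDdef
  have hgs : ∀ s : ℝ, g s = f (a + s • v) := fun s => rfl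
  have hDmem : ∀ s : ℝ, s ∈ D ↔ a + s • v ∉ A := fun s => Iff.rfl
  clear_value g D
  have hdense : ∀ u w : ℝ, u < w → ∃ s, s ∈ D ∧ u < s ∧ s < w := by
    intro u w huw
    obtain ⟨s, h1, h2, h3⟩ := line_dense hv htd a huw
    exact ⟨s, (hDmem s).mpr h3, h1, h2⟩
  have hmemUA : ∀ s : ℝ, s ∈ D → |s| < 5*r → a + s • v ∈ U \ A := by
    intro s hsD hsr
    exact ⟨hball5 (by rw [mem_ball, hdista]; exact hsr), (hDmem s).mp hsD⟩
  -- the chord property along lines parallel to v, with base z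
  have hchordz : ∀ (z : EuclideanSpace ℝ (Fin d)), z ∈ ball a r →
      ∀ s₁ s₂ s₃ : ℝ, z + s₁ • v ∉ A → z + s₂ • v ∉ A → z + s₃ • v ∉ A →
      -r < s₁ → s₁ < s₂ → s₂ < s₃ → s₃ < r →
      f (z + s₂ • v) * (s₃ - s₁) ≤ f (z + s₁ • v) * (s₃ - s₂) + f (z + s₃ • v) * (s₂ - s₁) := by
    intro z hz s₁ s₂ s₃ h1A h2A h3A hs₁ h12 h23 hs₃
    have hzsball : ∀ s : ℝ, |s| < r → z + s • v ∈ ball a (2*r) := by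
      intro s hs
      rw [mem_ball]
      calc dist (z + s • v) a ≤ dist (z + s • v) (a + s • v) + dist (a + s • v) a :=
            dist_triangle _ _ _
        _ = dist z a + |s| := by rw [hdistz, hdista]
        _ < 2 * r := by rw [mem_ball] at hz; linarith
    have habs1 : |s₁| < r := abs_lt.mpr ⟨hs₁, by linarith⟩
    have habs2 : |s₂| < r := abs_lt.mpr ⟨by linarith, by linarith⟩
    have habs3 : |s₃| < r := abs_lt.mpr ⟨by linarith, hs₃⟩
    set t : ℝ := (s₂ - s₁) / (s₃ - s₁) with htdef
    have h31 : (0:ℝ) < s₃ - s₁ := by linarith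
    have ht : t ∈ Set.Icc (0:ℝ) 1 := by
      constructor
      · apply div_nonneg (by linarith) (by linarith)
      · rw [div_le_one h31]; linarith
    have hpar : ∃ c : ℝ, (z + s₁ • v) - (z + s₃ • v) = c • v := ⟨s₁ - s₃, by module⟩
    have hxU : z + s₁ • v ∈ U := hball5 (ball_subset_ball (by linarith) (hzsball s₁ habs1))
    have hyU : z + s₃ • v ∈ U := hball5 (ball_subset_ball (by linarith) (hzsball s₃ habs3))
    have ht3 : t * (s₃ - s₁) = s₂ - s₁ := by
      rw [htdef, div_mul_cancel₀ _ (ne_of_gt h31)]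
    have hmid : (1 - t) • (z + s₁ • v) + t • (z + s₃ • v) = z + s₂ • v := by
      have e : (1 - t) • (z + s₁ • v) + t • (z + s₃ • v)
          = z + ((1-t) * s₁ + t * s₃) • v := by module
      rw [e]
      congr 1
      have : (1-t) * s₁ + t * s₃ = s₂ := by linear_combination ht3
      rw [this]
    have key := chordC hA hthin hf hpar hr
      (hseg_sub _ _ (hzsball s₁ habs1) (hzsball s₃ habs3))
      ⟨hxU, h1A⟩ ⟨hyU, h3A⟩ ht (by rw [hmid]; exact h2A)
    rw [hmid] at key
    have hmul := mul_le_mul_of_nonneg_right key (le_of_lt h31)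
    have expand : ((1 - t) * f (z + s₁ • v) + t * f (z + s₃ • v)) * (s₃ - s₁)
        = f (z + s₁ • v) * (s₃ - s₂) + f (z + s₃ • v) * (s₂ - s₁) := by
      linear_combination (f (z + s₃ • v) - f (z + s₁ • v)) * ht3
    linarith [hmul, expand]
  have hchord : ∀ s₁ s₂ s₃, s₁ ∈ D → s₂ ∈ D → s₃ ∈ D → -r < s₁ → s₁ < s₂ → s₂ < s₃ → s₃ < r →
      g s₂ * (s₃ - s₁) ≤ g s₁ * (s₃ - s₂) + g s₃ * (s₂ - s₁) := by
    intro s₁ s₂ s₃ h1 h2 h3 hs₁ h12 h23 hs₃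
    rw [hgs s₁, hgs s₂, hgs s₃]
    exact hchordz a (mem_ball_self hr) s₁ s₂ s₃ ((hDmem s₁).mp h1) ((hDmem s₂).mp h2)
      ((hDmem s₃).mp h3) hs₁ h12 h23 hs₃
  obtain ⟨L, hP⟩ := right_lim g D r hr
    (fun u w _ huw _ => hdense u w huw) hchord
  refine ⟨L, Metric.tendsto_nhdsWithin_nhds.mpr ?_⟩
  intro ε hε
  set ε' := min (ε / 7) 1 with hε'def
  clear_value ε'
  have hε' : 0 < ε' := hε'def ▸ lt_min (by positivity) one_pos
  have hε'le : ε' ≤ ε / 7 := hε'def ▸ min_le_left _ _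
  have hε'1 : ε' ≤ 1 := hε'def ▸ min_le_right _ _
  obtain ⟨η, hη, hPε⟩ := hP ε' hε'
  -- pick d₋
  obtain ⟨dm, hdmD, hdm1, hdm2⟩ := hdense (-r/2) (-r/4) (by linarith)
  have hdmneg : dm < 0 := by linarith
  set Kc : ℝ := |g dm - L| + 1 with hKcdef
  clear_value Kc
  have hKc : 0 < Kc := by rw [hKcdef]; positivity
  -- pick s₂
  set b : ℝ := min (min η r) (ε' * (r/4) / Kc) with hbdef
  clear_value b
  have hb : 0 < b := hbdef ▸ lt_min (lt_min hη hr) (by positivity)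
  obtain ⟨s₂, hs₂D, hs₂0, hs₂b⟩ := hdense 0 b hb
  have hs₂η : s₂ < η := lt_of_lt_of_le hs₂b (hbdef ▸ le_trans (min_le_left _ _) (min_le_left _ _))
  have hs₂r : s₂ < r := lt_of_lt_of_le hs₂b (hbdef ▸ le_trans (min_le_left _ _) (min_le_right _ _))
  have hs₂K : s₂ ≤ ε' * (r/4) / Kc := le_of_lt (lt_of_lt_of_le hs₂b (hbdef ▸ min_le_right _ _))
  -- pick s₁
  obtain ⟨s₁, hs₁D, hs₁l, hs₁u⟩ := hdense (s₂/3) (s₂/2) (by linarith)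
  have hs₁0 : 0 < s₁ := by linarith
  have hs₁2 : s₁ < s₂ := by linarith
  -- closeness of g values to L
  have hgs₁ : |g s₁ - L| < ε' := hPε s₁ hs₁D hs₁0 (by linarith)
  have hgs₂ : |g s₂ - L| < ε' := hPε s₂ hs₂D hs₂0 hs₂η
  -- the three reference points
  have hp₁ : a + s₁ • v ∈ U \ A := hmemUA s₁ hs₁D (by rw [abs_of_pos hs₁0]; linarith)
  have hp₂ : a + s₂ • v ∈ U \ A := hmemUA s₂ hs₂D (by rw [abs_of_pos hs₂0]; linarith)
  have hq : a + dm • v ∈ U \ A := hmemUA dm hdmD (by rw [abs_of_neg hdmneg]; linarith)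
  -- continuity radii
  obtain ⟨δ₁, hδ₁, hc₁⟩ := Metric.continuousAt_iff.mp (cont_off hf hp₁) ε' hε'
  obtain ⟨δ₂, hδ₂, hc₂⟩ := Metric.continuousAt_iff.mp (cont_off hf hp₂) ε' hε'
  obtain ⟨δ₃, hδ₃, hc₃⟩ := Metric.continuousAt_iff.mp (cont_off hf hq) ε' hε'
  -- off-A radii
  obtain ⟨δ₁', hδ₁', hA₁⟩ := Metric.isOpen_iff.mp hA.isOpen_compl _ hp₁.2
  obtain ⟨δ₂', hδ₂', hA₂⟩ := Metric.isOpen_iff.mp hA.isOpen_compl _ hp₂.2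
  obtain ⟨δ₃', hδ₃', hA₃⟩ := Metric.isOpen_iff.mp hA.isOpen_compl _ hq.2
  set ρ : ℝ := min (min (min δ₁ δ₁') (min δ₂ δ₂')) (min (min δ₃ δ₃') r) with hρdef
  clear_value ρ
  have hρ : 0 < ρ := by
    rw [hρdef]
    apply lt_min (lt_min (lt_min hδ₁ hδ₁') (lt_min hδ₂ hδ₂')) (lt_min (lt_min hδ₃ hδ₃') hr)
  refine ⟨ρ, hρ, ?_⟩
  intro z hz hdz
  have hρ₁ : ρ ≤ δ₁ := hρdef ▸ le_trans (min_le_left _ _) (le_trans (min_le_left _ _) (min_le_left _ _))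
  have hρ₁' : ρ ≤ δ₁' := hρdef ▸ le_trans (min_le_left _ _) (le_trans (min_le_left _ _) (min_le_right _ _))
  have hρ₂ : ρ ≤ δ₂ := hρdef ▸ le_trans (min_le_left _ _) (le_trans (min_le_right _ _) (min_le_left _ _))
  have hρ₂' : ρ ≤ δ₂' := hρdef ▸ le_trans (min_le_left _ _) (le_trans (min_le_right _ _) (min_le_right _ _))
  have hρ₃ : ρ ≤ δ₃ := hρdef ▸ le_trans (min_le_right _ _) (le_trans (min_le_left _ _) (min_le_left _ _))
  have hρ₃' : ρ ≤ δ₃' := hρdef ▸ le_trans (min_le_right _ _) (le_trans (min_le_left _ _) (min_le_right _ _))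
  have hρr : ρ ≤ r := hρdef ▸ le_trans (min_le_right _ _) (min_le_right _ _)
  have hzball : z ∈ ball a r := mem_ball.mpr (lt_of_lt_of_le hdz hρr)
  -- f values at translated points
  have hfs₁ : |f (z + s₁ • v) - g s₁| < ε' := by
    rw [hgs s₁, ← Real.dist_eq]
    exact hc₁ (by rw [hdistz]; exact lt_of_lt_of_le hdz hρ₁)
  have hfs₂ : |f (z + s₂ • v) - g s₂| < ε' := by
    rw [hgs s₂, ← Real.dist_eq]
    exact hc₂ (by rw [hdistz]; exact lt_of_lt_of_le hdz hρ₂)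
  have hfdm : |f (z + dm • v) - g dm| < ε' := by
    rw [hgs dm, ← Real.dist_eq]
    exact hc₃ (by rw [hdistz]; exact lt_of_lt_of_le hdz hρ₃)
  -- off A
  have hzs₁A : z + s₁ • v ∉ A := hA₁ (by rw [mem_ball, hdistz]; exact lt_of_lt_of_le hdz hρ₁')
  have hzs₂A : z + s₂ • v ∉ A := hA₂ (by rw [mem_ball, hdistz]; exact lt_of_lt_of_le hdz hρ₂')
  have hzdmA : z + dm • v ∉ A := hA₃ (by rw [mem_ball, hdistz]; exact lt_of_lt_of_le hdz hρ₃')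
  have hz0 : z + (0:ℝ) • v ∉ A := by
    rw [zero_smul, add_zero]; exact hz.2
  -- UPPER BOUND : use chordz with  dm < 0 < s₂
  have hub : f z ≤ L + 3 * ε' := by
    have hch := hchordz z hzball dm 0 s₂ hzdmA hz0 hzs₂A (by linarith) hdmneg hs₂0 hs₂r
    rw [zero_smul, add_zero] at hch
    -- hch : f z * (s₂ - dm) ≤ f (z + dm•v) * s₂ + f (z + s₂•v) * (0 - dm)
    have habs : f (z + dm • v) ≤ g dm + ε' := by
      rw [abs_lt] at hfdm; linarith [hfdm.2]
    have habs2 : f (z + s₂ • v) ≤ L + 2*ε' := by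
      rw [abs_lt] at hfs₂ hgs₂; linarith [hfs₂.2, hgs₂.2]
    have hdm4 : r/4 ≤ -dm := by linarith
    have hKcb : |g dm - L| + ε' ≤ Kc := by rw [hKcdef]; linarith
    -- from hch : f z ≤ (s₂/(s₂ - dm)) (g dm + ε') + ((-dm)/(s₂-dm)) (L+2ε')
    have hden : (0:ℝ) < s₂ - dm := by linarith
    have step1 : f z * (s₂ - dm) ≤ (g dm + ε') * s₂ + (L + 2*ε') * (0 - dm) := by
      have m1 : f (z + dm • v) * s₂ ≤ (g dm + ε') * s₂ :=
        mul_le_mul_of_nonneg_right habs hs₂0.le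
      have m2 : f (z + s₂ • v) * (0 - dm) ≤ (L + 2*ε') * (0 - dm) :=
        mul_le_mul_of_nonneg_right habs2 (by linarith)
      linarith [hch, m1, m2]
    -- s₂ * (|g dm - L| + ε') ≤ ε' * (r/4) ≤ ε' * (-dm)
    have hs₂small : s₂ * Kc ≤ ε' * (-dm) := by
      have h1 : s₂ * Kc ≤ (ε' * (r/4) / Kc) * Kc := mul_le_mul_of_nonneg_right hs₂K (le_of_lt hKc)
      have h2 : (ε' * (r/4) / Kc) * Kc = ε' * (r/4) := div_mul_cancel₀ _ (ne_of_gt hKc)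
      have h3 : ε' * (r/4) ≤ ε' * (-dm) := mul_le_mul_of_nonneg_left hdm4 (le_of_lt hε')
      linarith
    -- expand : (g dm + ε') * s₂ + (L+2ε')*(-dm) ≤ (L + 3ε')(s₂ - dm)
    have step2 : (g dm + ε') * s₂ + (L + 2*ε') * (0 - dm) ≤ (L + 3*ε') * (s₂ - dm) := by
      have m3 : s₂ * (g dm - L) ≤ s₂ * Kc := by
        apply mul_le_mul_of_nonneg_left _ hs₂0.le
        rw [hKcdef]
        linarith [le_abs_self (g dm - L)]
      linarith [m3, hs₂small, mul_nonneg hε'.le hs₂0.le]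
    exact le_of_mul_le_mul_right (le_trans step1 step2) hden
  -- LOWER BOUND : use chordz with 0 < s₁ < s₂
  have hlb : L - 6 * ε' ≤ f z := by
    have hch := hchordz z hzball 0 s₁ s₂ hz0 hzs₁A hzs₂A (by linarith) hs₁0 hs₁2 hs₂r
    rw [zero_smul, add_zero] at hch
    -- hch : f (z+s₁•v) * (s₂ - 0) ≤ f z * (s₂ - s₁) + f (z + s₂•v) * (s₁ - 0)
    have habs1 : L - 2*ε' ≤ f (z + s₁ • v) := by
      rw [abs_lt] at hfs₁ hgs₁; linarith [hfs₁.1, hgs₁.1]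
    have habs2 : f (z + s₂ • v) ≤ L + 2*ε' := by
      rw [abs_lt] at hfs₂ hgs₂; linarith [hfs₂.2, hgs₂.2]
    have hden : (0:ℝ) < s₂ - s₁ := by linarith
    -- (L - 2ε') s₂ ≤ f z (s₂ - s₁) + (L+2ε') s₁
    have step1 : (L - 2*ε') * s₂ ≤ f z * (s₂ - s₁) + (L + 2*ε') * s₁ := by
      have m1 : (L - 2*ε') * s₂ ≤ f (z + s₁ • v) * s₂ :=
        mul_le_mul_of_nonneg_right habs1 hs₂0.le
      have m2 : f (z + s₂ • v) * s₁ ≤ (L + 2*ε') * s₁ :=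
        mul_le_mul_of_nonneg_right habs2 hs₁0.le
      linarith [hch, m1, m2]
    -- want : (L - 6 ε')(s₂ - s₁) ≤ f z (s₂ - s₁)
    have step2 : (L - 6*ε') * (s₂ - s₁) ≤ f z * (s₂ - s₁) := by
      have m4 : (0:ℝ) ≤ ε' * (s₂ - 2*s₁) := mul_nonneg hε'.le (by linarith)
      linarith [step1, m4]
    exact le_of_mul_le_mul_right step2 hden
  rw [Real.dist_eq, abs_lt]
  constructor <;> [linarith [hlb]; linarith [hub]]

theorem statement4 (d : ℕ) (A : Set (EuclideanSpace ℝ (Fin d))) (hA : IsClosed A)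
    (v : EuclideanSpace ℝ (Fin d)) (hv : ‖v‖ = 1)
    (htd : TotallyDisconnectedIn A v) (hthin : IntervallyThinIn A v)
    (U : Set (EuclideanSpace ℝ (Fin d))) (hU : IsOpen U)
    (f : EuclideanSpace ℝ (Fin d) → ℝ) (hf : IsLocallyConvexOn (U \ A) f) :
    ∃ F : EuclideanSpace ℝ (Fin d) → ℝ,
      ContinuousOn F U ∧ Set.EqOn F f (U \ A) := by
  have hdense : U ⊆ closure (U \ A) := by
    intro x hx
    rw [Metric.mem_closure_iff]
    intro ε hε
    obtain ⟨ε', hε', hball⟩ := Metric.isOpen_iff.mp hU x hx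
    set ε'' := min ε ε' with hε''def
    have hε'' : 0 < ε'' := lt_min hε hε'
    obtain ⟨x', hx'b, y', _, hseg⟩ := hthin x x ⟨0, by simp⟩ ε'' hε''
    refine ⟨x', ⟨hball (mem_ball.mpr (lt_of_lt_of_le (mem_ball.mp hx'b) (min_le_right _ _))),
      fun hx'A => ?_⟩, ?_⟩
    · have : x' ∈ segment ℝ x' y' ∩ A := ⟨left_mem_segment ℝ x' y', hx'A⟩
      rw [hseg] at this
      exact this
    · rw [dist_comm]
      exact lt_of_lt_of_le (mem_ball.mp hx'b) (min_le_left _ _)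
  have hlim : ∀ x ∈ U, ∃ L : ℝ, Filter.Tendsto f (nhdsWithin x (U \ A)) (nhds L) :=
    fun x hx => tendsto_of_mem hA hv htd hthin hU hf hx
  refine ⟨extendFrom (U \ A) f, continuousOn_extendFrom hdense hlim, ?_⟩
  intro x hx
  exact extendFrom_eq (subset_closure hx) (cont_off hf hx).continuousWithinAt
end

section
/- Let $K \subset \mathbb{R}^d$ be a closed set which is intervally thin in a direction $v \in S^{d-1}$, and let $f : \mathbb{R}^d \to \mathbb{R}$ be continuous on $\mathbb{R}^d$ and locally convex on $\mathbb{R}^d \setminus K$. Then $f$ is convex on every line parallel to $v$; that is, for every $a \in \mathbb{R}^d$ the function $t \mapsto f(a + t v)$ is convex on $\mathbb{R}$. -/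
open Filter Topology

/-- Adding an affine function preserves convexity on a set of reals. -/
lemma convexOn_add_affine {s : Set ℝ} {h : ℝ → ℝ} (hc : ConvexOn ℝ s h) (p q : ℝ) :
    ConvexOn ℝ s (fun t => h t + (p * t + q)) := by
  refine ⟨hc.1, fun x hx y hy α β hα hβ hαβ => ?_⟩
  have h1 := hc.2 hx hy hα hβ hαβ
  simp only [smul_eq_mul] at h1 ⊢
  have h2 : p * (α * x + β * y) + q = α * (p * x + q) + β * (p * y + q) := by
    linear_combination -q * hαβ
  linarith
/-- One-dimensional maximum principle: a continuous function on ℝ which is convex on a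
ball around every point of `[0,1]` lies below the secant over `[0,1]`. -/
lemma oneDim_secant (h : ℝ → ℝ) (hc : Continuous h)
    (hl : ∀ t ∈ Set.Icc (0:ℝ) 1, ∃ δ > 0, ConvexOn ℝ (Metric.ball t δ) h) :
    ∀ l ∈ Set.Icc (0:ℝ) 1, h l ≤ (1 - l) * h 0 + l * h 1 := by
  obtain ⟨φ, hφ⟩ : ∃ φ : ℝ → ℝ, φ = fun t => h t - ((1 - t) * h 0 + t * h 1) := ⟨_, rfl⟩
  have hφc : Continuous φ := by rw [hφ]; fun_prop
  have hφ0 : φ 0 = 0 := by simp [hφ]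
  have hφ1 : φ 1 = 0 := by simp [hφ]
  have hφl : ∀ t ∈ Set.Icc (0:ℝ) 1, ∃ δ > 0, ConvexOn ℝ (Metric.ball t δ) φ := by
    intro t ht
    obtain ⟨δ, hδ, hconv⟩ := hl t ht
    refine ⟨δ, hδ, ?_⟩
    have := convexOn_add_affine hconv (h 0 - h 1) (-h 0)
    convert this using 2 with u
    simp [hφ]; ring
  intro l hl0
  by_contra hcon
  push_neg at hcon
  have hMl : 0 < φ l := by rw [hφ]; simp; linarith
  obtain ⟨c0, hc0mem, hc0max⟩ :=
    (isCompact_Icc (a := (0:ℝ)) (b := 1)).exists_isMaxOn ⟨0, by norm_num⟩ hφc.continuousOn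
  obtain ⟨M, hM⟩ : ∃ M : ℝ, M = φ c0 := ⟨_, rfl⟩
  have hMpos : 0 < M := by rw [hM]; exact lt_of_lt_of_le hMl (hc0max hl0)
  obtain ⟨A, hA⟩ : ∃ A : Set ℝ, A = {t | t ∈ Set.Icc (0:ℝ) 1 ∧ φ t = M} := ⟨_, rfl⟩
  have hAclosed : IsClosed A := by
    have : A = Set.Icc (0:ℝ) 1 ∩ φ ⁻¹' {M} := by rw [hA]; rfl
    rw [this]
    exact isClosed_Icc.inter (isClosed_singleton.preimage hφc)
  have hAne : A.Nonempty := ⟨c0, by rw [hA]; exact ⟨hc0mem, hM.symm⟩⟩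
  have hAbdd : BddAbove A := ⟨1, fun t ht => by rw [hA] at ht; exact ht.1.2⟩
  obtain ⟨c, hc⟩ : ∃ c : ℝ, c = sSup A := ⟨_, rfl⟩
  have hcA : c ∈ A := by rw [hc]; exact hAclosed.csSup_mem hAne hAbdd
  rw [hA] at hcA
  obtain ⟨hcIcc, hcM⟩ := hcA
  have hc0' : c ≠ 0 := fun h0 => by rw [h0, hφ0] at hcM; linarith
  have hc1' : c ≠ 1 := fun h1 => by rw [h1, hφ1] at hcM; linarith
  have hc0lt : 0 < c := lt_of_le_of_ne hcIcc.1 (Ne.symm hc0')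
  have hc1lt : c < 1 := lt_of_le_of_ne hcIcc.2 hc1'
  obtain ⟨δ, hδ, hconv⟩ := hφl c hcIcc
  obtain ⟨δ', hδ'⟩ : ∃ δ' : ℝ, δ' = min δ (min c (1 - c)) / 2 := ⟨_, rfl⟩
  have hδ'pos : 0 < δ' := by
    rw [hδ']
    apply div_pos _ (by norm_num)
    exact lt_min hδ (lt_min hc0lt (by linarith))
  have hδ'δ : δ' < δ := by
    rw [hδ']; have := min_le_left δ (min c (1 - c)); linarith
  have hδ'c : δ' < c := by
    rw [hδ']
    have h1 := min_le_right δ (min c (1 - c))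
    have h2 := min_le_left c (1 - c)
    linarith
  have hδ'c1 : δ' < 1 - c := by
    rw [hδ']
    have h1 := min_le_right δ (min c (1 - c))
    have h2 := min_le_right c (1 - c)
    linarith
  have hmem1 : c - δ' ∈ Metric.ball c δ := by
    rw [Metric.mem_ball, Real.dist_eq]
    have : c - δ' - c = -δ' := by ring
    rw [this, abs_neg, abs_of_pos hδ'pos]
    exact hδ'δ
  have hmem2 : c + δ' ∈ Metric.ball c δ := by
    rw [Metric.mem_ball, Real.dist_eq]
    have : c + δ' - c = δ' := by ring
    rw [this, abs_of_pos hδ'pos]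
    exact hδ'δ
  have hmid := hconv.2 hmem1 hmem2 (by norm_num : (0:ℝ) ≤ 1/2) (by norm_num : (0:ℝ) ≤ 1/2)
    (by norm_num)
  have hmideq : (1/2 : ℝ) • (c - δ') + (1/2 : ℝ) • (c + δ') = c := by
    simp only [smul_eq_mul]; ring
  rw [hmideq] at hmid
  simp only [smul_eq_mul] at hmid
  have hIcc1 : c - δ' ∈ Set.Icc (0:ℝ) 1 := ⟨by linarith, by linarith⟩
  have hIcc2 : c + δ' ∈ Set.Icc (0:ℝ) 1 := ⟨by linarith, by linarith⟩
  have hle1 : φ (c - δ') ≤ M := by rw [hM]; exact hc0max hIcc1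
  have hle2 : φ (c + δ') ≤ M := by rw [hM]; exact hc0max hIcc2
  rw [hcM] at hmid
  have heq2 : φ (c + δ') = M := by linarith
  have hmemA : c + δ' ∈ A := by rw [hA]; exact ⟨hIcc2, heq2⟩
  have hle : c + δ' ≤ sSup A := le_csSup hAbdd hmemA
  rw [← hc] at hle
  linarith

theorem statement9 (d : ℕ) (K : Set (EuclideanSpace ℝ (Fin d))) (hK : IsClosed K)
    (v : EuclideanSpace ℝ (Fin d)) (hv : ‖v‖ = 1) (hthin : IntervallyThinIn K v)
    (f : EuclideanSpace ℝ (Fin d) → ℝ) (hf : Continuous f)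
    (hloc : IsLocallyConvexOn Kᶜ f) (a : EuclideanSpace ℝ (Fin d)) :
    ConvexOn ℝ Set.univ (fun t : ℝ => f (a + t • v)) := by
  -- Step 1: secant inequality along any segment disjoint from K
  have seg_ineq : ∀ (x' y' : EuclideanSpace ℝ (Fin d)), segment ℝ x' y' ∩ K = ∅ →
      ∀ l ∈ Set.Icc (0:ℝ) 1,
        f ((1 - l) • x' + l • y') ≤ (1 - l) * f x' + l * f y' := by
    intro x' y' hseg l hl
    set L : ℝ →ᵃ[ℝ] EuclideanSpace ℝ (Fin d) := AffineMap.lineMap x' y' with hL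
    have hLapp : ∀ t : ℝ, L t = (1 - t) • x' + t • y' := by
      intro t
      simp [hL, AffineMap.lineMap_apply]
      module
    have hLcont : Continuous L := AffineMap.lineMap_continuous
    have key := oneDim_secant (fun t => f (L t)) (hf.comp hLcont) ?_ l hl
    · simpa [hLapp] using key
    · intro t ht
      have hpt : L t ∈ Kᶜ := by
        intro hmem
        have hseg' : L t ∈ segment ℝ x' y' := by
          rw [hLapp]
          exact ⟨1 - t, t, by linarith [ht.2], ht.1, by ring, rfl⟩
        exact Set.eq_empty_iff_forall_notMem.1 hseg (L t) ⟨hseg', hmem⟩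
      obtain ⟨V, hVopen, hVconv, hptV, hVK, hVf⟩ := hloc (L t) hpt
      have hpre : IsOpen (⇑L ⁻¹' V) := hVopen.preimage hLcont
      obtain ⟨δ, hδpos, hball⟩ := Metric.isOpen_iff.1 hpre t hptV
      refine ⟨δ, hδpos, ?_⟩
      have hcomp : ConvexOn ℝ (⇑L ⁻¹' V) (f ∘ ⇑L) := hVf.comp_affineMap L
      exact hcomp.subset hball (convex_ball t δ)
  -- Step 2: secant inequality on lines parallel to v, by thinness and limits
  have key : ∀ (x y : EuclideanSpace ℝ (Fin d)), (∃ r : ℝ, x - y = r • v) →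
      ∀ l ∈ Set.Icc (0:ℝ) 1,
        f ((1 - l) • x + l • y) ≤ (1 - l) * f x + l * f y := by
    intro x y hpar l hl
    have hseq : ∀ n : ℕ, ∃ x' ∈ Metric.ball x (1/(n+1)), ∃ y' ∈ Metric.ball y (1/(n+1)),
        segment ℝ x' y' ∩ K = ∅ := fun n => hthin x y hpar _ (by positivity)
    choose xs hxs ys hys hseg using hseq
    have hxlim : Tendsto xs atTop (𝓝 x) := by
      rw [tendsto_iff_dist_tendsto_zero]
      exact squeeze_zero (fun n => dist_nonneg) (fun n => le_of_lt (hxs n))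
        tendsto_one_div_add_atTop_nhds_zero_nat
    have hylim : Tendsto ys atTop (𝓝 y) := by
      rw [tendsto_iff_dist_tendsto_zero]
      exact squeeze_zero (fun n => dist_nonneg) (fun n => le_of_lt (hys n))
        tendsto_one_div_add_atTop_nhds_zero_nat
    have hineq : ∀ n : ℕ, f ((1 - l) • xs n + l • ys n) ≤ (1 - l) * f (xs n) + l * f (ys n) :=
      fun n => seg_ineq (xs n) (ys n) (hseg n) l hl
    have hlim1 : Tendsto (fun n => f ((1 - l) • xs n + l • ys n)) atTop
        (𝓝 (f ((1 - l) • x + l • y))) := by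
      apply (hf.tendsto _).comp
      exact (hxlim.const_smul (1 - l)).add (hylim.const_smul l)
    have hlim2 : Tendsto (fun n => (1 - l) * f (xs n) + l * f (ys n)) atTop
        (𝓝 ((1 - l) * f x + l * f y)) :=
      (((hf.tendsto x).comp hxlim).const_mul _).add (((hf.tendsto y).comp hylim).const_mul _)
    exact le_of_tendsto_of_tendsto' hlim1 hlim2 hineq
  -- Step 3: conclude
  refine ⟨convex_univ, fun s _ t _ α β hα hβ hαβ => ?_⟩
  have hα1 : α = 1 - β := by linarith
  subst hα1
  have h1 : a + (((1 - β) * s + β * t) : ℝ) • v =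
      (1 - β) • (a + s • v) + β • (a + t • v) := by module
  simp only [smul_eq_mul]
  rw [h1]
  exact key (a + s • v) (a + t • v) ⟨s - t, by module⟩ β ⟨hβ, by linarith⟩
end
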